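/- Let κ > 0, δ > 0, and let F : [0,∞) → [0,∞) be convex with F(0) = 0 and F(r) > 0 for r > 0, continuously differentiable on (0,∞), and satisfying F'(r)·r ≥ (1+δ)·F(r) for all r > 0. Let G : (0,∞) → (0,∞) denote the inverse function of r ↦ F(r)/r on (0,∞) (this inverse exists, since F(r)/r is strictly increasing with limit 0 at 0⁺ and limit ∞ at ∞). Suppose Λ : [0,∞) → [0,∞) is twice differentiable with Λ'(t) < 0 for all t ≥ 0, satisfies the differential inequality Λ''(t) ≥ −2κ·Λ'(t) + 2·F(−Λ'(t)) for all t ≥ 0, and satisfies Λ(T) → 0 as T → ∞. Then Λ(0) ≤ ∫₀^∞ G( κ / ( e^{2δκt}·(1 + κ·(−Λ'(0))/F(−Λ'(0))) − 1 ) ) dt. (This is the analytic core of the proof of Theorem 3.4, applied there with Λ(t) = Ent_μ(P_t f), Λ'(0) = −I(f).) -/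

import Mathlib

/-!
With u = -Λ', the quantity φ = 1 + κ u / F(u) satisfies φ' ≥ 2δκ φ: its derivative is
κ u' (F(u) - u F'(u)) / F(u)², and the differential inequality and the growth condition bound
the two nonpositive factors u' and F(u) - u F'(u) by -2(κu + F(u)) and -δ F(u).
Hence φ(t) ≥ e^{2δκt} φ(0), i.e. F(u)/u ≤ κ / (e^{2δκt} φ(0) - 1), and since F(r)/r is
increasing with right inverse G this bounds u(t) by the integrand. Integrating, Λ(0) = ∫₀^∞ u
because Λ → 0.
-/

open Real Filter MeasureTheory Set Topology

theorem strictMonoOn_div_self_of_lt_deriv_mul {F F' : ℝ → ℝ}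
    (hF : ∀ r, 0 < r → HasDerivAt F (F' r) r) (hlt : ∀ r, 0 < r → F r < F' r * r) :
    StrictMonoOn (fun r => F r / r) (Ioi 0) := by
  refine strictMonoOn_of_hasDerivWithinAt_pos (convex_Ioi 0)
    (f' := fun r => (F' r * r - F r * 1) / r ^ 2)
    (fun r hr => ((hF r hr).continuousAt.div continuousAt_id hr.ne').continuousWithinAt)
    (fun r hr => ?_) (fun r hr => ?_) <;> rw [interior_Ioi] at hr
  · exact ((hF r hr).div (hasDerivAt_id r) hr.ne').hasDerivWithinAt
  · have := hlt r hr
    exact div_pos (by linarith) (pow_pos hr 2)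

theorem le_apply_div_sub_one {F G : ℝ → ℝ} (hmono : StrictMonoOn (fun r => F r / r) (Ioi 0))
    (hG : ∀ s, 0 < s → 0 < G s ∧ F (G s) / G s = s) {κ b u : ℝ} (hκ : 0 < κ) (hb : 1 < b)
    (hu : 0 < u) (hFu : 0 < F u) (h : b ≤ 1 + κ * u / F u) : u ≤ G (κ / (b - 1)) := by
  obtain ⟨hGpos, hGeq⟩ := hG _ (div_pos hκ (sub_pos.2 hb))
  refine (hmono.le_iff_le hu hGpos).1 ?_
  rw [hGeq, div_le_div_iff₀ hu (sub_pos.2 hb)]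
  have := (le_div_iff₀ hFu).1 (show b - 1 ≤ κ * u / F u by linarith)
  linarith

theorem mul_exp_le_of_mul_le_deriv {φ φ' : ℝ → ℝ} {a c : ℝ}
    (hφ : ∀ t ∈ Ici a, HasDerivWithinAt φ (φ' t) (Ici a) t)
    (hle : ∀ t ∈ Ici a, c * φ t ≤ φ' t) {t : ℝ} (ht : a ≤ t) :
    φ a * exp (c * (t - a)) ≤ φ t := by
  have hψ : ∀ t ∈ Ici a, HasDerivWithinAt (fun s => exp (-(c * s)) * φ s)
      (exp (-(c * t)) * (φ' t - c * φ t)) (Ici a) t := fun t ht => by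
    have hexp : HasDerivAt (fun s => exp (-(c * s))) (exp (-(c * t)) * -c) t := by
      simpa using ((hasDerivAt_id' t).const_mul c).neg.exp
    exact (hexp.hasDerivWithinAt.mul (hφ t ht)).congr_deriv (by ring)
  have hmono : MonotoneOn (fun s => exp (-(c * s)) * φ s) (Ici a) :=
    monotoneOn_of_hasDerivWithinAt_nonneg (convex_Ici a)
      (fun s hs => (hψ s hs).continuousWithinAt)
      (fun s hs => (hψ s (interior_subset hs)).mono interior_subset)
      (fun s hs => mul_nonneg (exp_pos _).le (sub_nonneg.2 (hle s (interior_subset hs))))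
  have := mul_le_mul_of_nonneg_left (hmono self_mem_Ici ht ht) (exp_pos (c * t)).le
  calc φ a * exp (c * (t - a)) = exp (c * t) * (exp (-(c * a)) * φ a) := by
        rw [mul_sub, exp_sub, exp_neg]; ring
    _ ≤ exp (c * t) * (exp (-(c * t)) * φ t) := this
    _ = φ t := by rw [← mul_assoc, ← exp_add, add_neg_cancel, exp_zero, one_mul]

theorem ofReal_eq_lintegral_Ioi_neg_deriv {f f' : ℝ → ℝ} {a : ℝ}
    (hcont : ContinuousWithinAt f (Ici a) a) (hderiv : ∀ x ∈ Ioi a, HasDerivAt f (f' x) x)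
    (hf' : ∀ x ∈ Ioi a, f' x ≤ 0) (hf : Tendsto f atTop (𝓝 0)) :
    ENNReal.ofReal (f a) = ∫⁻ x in Ioi a, ENNReal.ofReal (-f' x) := by
  have hint : IntegrableOn (fun x => -f' x) (Ioi a) :=
    (integrableOn_Ioi_deriv_of_nonpos hcont hderiv hf' hf).neg
  rw [← ofReal_integral_eq_lintegral_ofReal hint
    ((ae_restrict_iff' measurableSet_Ioi).2 (Eventually.of_forall fun x hx => neg_nonneg.2 (hf' x hx))),
    integral_neg, integral_Ioi_of_hasDerivAt_of_nonpos hcont hderiv hf' hf, zero_sub, neg_neg]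

theorem one_add_div_mul_exp_le_of_deriv_le {κ δ a : ℝ} {F F' u u' : ℝ → ℝ} (hκ : 0 < κ)
    (hδ : 0 ≤ δ) (hF : ∀ r, 0 < r → HasDerivAt F (F' r) r) (hFpos : ∀ r, 0 < r → 0 < F r)
    (hFgrow : ∀ r, 0 < r → (1 + δ) * F r ≤ F' r * r) (hu : ∀ t ∈ Ici a, 0 < u t)
    (hu' : ∀ t ∈ Ici a, HasDerivWithinAt u (u' t) (Ici a) t)
    (hode : ∀ t ∈ Ici a, u' t ≤ -(2 * κ * u t + 2 * F (u t))) {t : ℝ} (ht : a ≤ t) :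
    (1 + κ * u a / F (u a)) * exp (2 * δ * κ * (t - a)) ≤ 1 + κ * u t / F (u t) := by
  refine mul_exp_le_of_mul_le_deriv (φ := fun t => 1 + κ * u t / F (u t)) (c := 2 * δ * κ)
    (φ' := fun t => (κ * u' t * F (u t) - κ * u t * (F' (u t) * u' t)) / F (u t) ^ 2)
    (fun t ht => ?_) (fun t ht => ?_) ht
  · exact (((hu' t ht).const_mul κ).div ((hF _ (hu t ht)).comp_hasDerivWithinAt t (hu' t ht))
      (hFpos _ (hu t ht)).ne').const_add 1
  · have hx := hu t ht
    have hv := hFpos _ hx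
    have hgrow := hFgrow _ hx
    have hA := hode t ht
    set x := u t
    set v := F x
    set w := F' x
    set A := u' t
    have hcross : 0 ≤ (-(2 * κ * x + 2 * v) - A) * (x * w - v) :=
      mul_nonneg (by linarith) (by nlinarith)
    have hgrowth : 0 ≤ (2 * κ * x + 2 * v) * (x * w - v - δ * v) :=
      mul_nonneg (by positivity) (by linarith)
    rw [le_div_iff₀ (by positivity)]
    have : 2 * δ * κ * (1 + κ * x / v) * v ^ 2 = 2 * δ * κ * v * (v + κ * x) := by
      field_simp
    rw [this]
    nlinarith [mul_nonneg hκ.le hcross, mul_nonneg hκ.le hgrowth]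

theorem stmt_0 (κ δ : ℝ) (hκ : 0 < κ) (hδ : 0 < δ)
    (F F' : ℝ → ℝ)
    (hFpos : ∀ r : ℝ, 0 < r → 0 < F r)
    (hFderiv : ∀ r : ℝ, 0 < r → HasDerivAt F (F' r) r)
    (hFgrow : ∀ r : ℝ, 0 < r → (1 + δ) * F r ≤ F' r * r)
    (G : ℝ → ℝ)
    (hG2 : ∀ s : ℝ, 0 < s → 0 < G s ∧ F (G s) / G s = s)
    (Λ Λ' Λ'' : ℝ → ℝ)
    (hΛd : ∀ t ∈ Ici (0:ℝ), HasDerivWithinAt Λ (Λ' t) (Ici 0) t)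
    (hΛd' : ∀ t ∈ Ici (0:ℝ), HasDerivWithinAt Λ' (Λ'' t) (Ici 0) t)
    (hΛ'neg : ∀ t ∈ Ici (0:ℝ), Λ' t < 0)
    (hODE : ∀ t ∈ Ici (0:ℝ), -2 * κ * Λ' t + 2 * F (-Λ' t) ≤ Λ'' t)
    (hlim : Tendsto Λ atTop (nhds 0)) :
    ENNReal.ofReal (Λ 0) ≤
      ∫⁻ t in Ioi (0:ℝ), ENNReal.ofReal
        (G (κ / (Real.exp (2 * δ * κ * t) * (1 + κ * (-Λ' 0) / F (-Λ' 0)) - 1))) := by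
  have hu : ∀ t ∈ Ici (0:ℝ), 0 < -Λ' t := fun t ht => neg_pos.2 (hΛ'neg t ht)
  have hslope := strictMonoOn_div_self_of_lt_deriv_mul hFderiv fun r hr => by
    nlinarith [hFgrow r hr, hFpos r hr]
  have hC : 1 < 1 + κ * (-Λ' 0) / F (-Λ' 0) :=
    lt_add_of_pos_right _ (div_pos (mul_pos hκ (hu 0 self_mem_Ici)) (hFpos _ (hu 0 self_mem_Ici)))
  have hbound : ∀ t ∈ Ioi (0:ℝ),
      -Λ' t ≤ G (κ / (exp (2 * δ * κ * t) * (1 + κ * (-Λ' 0) / F (-Λ' 0)) - 1)) := by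
    intro t ht
    have hut := hu t (Ioi_subset_Ici_self ht)
    have hgrowth := one_add_div_mul_exp_le_of_deriv_le (u := fun t => -Λ' t)
      hκ hδ.le hFderiv hFpos hFgrow hu (fun t ht => (hΛd' t ht).neg)
      (fun t ht => by linarith [hODE t ht]) ht.le
    rw [sub_zero, mul_comm] at hgrowth
    exact le_apply_div_sub_one hslope hG2 hκ
      (one_lt_mul_of_le_of_lt (one_le_exp (mul_nonneg (by positivity) ht.le)) hC)
      hut (hFpos _ hut) hgrowth
  calc ENNReal.ofReal (Λ 0) = ∫⁻ t in Ioi 0, ENNReal.ofReal (-Λ' t) :=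
        ofReal_eq_lintegral_Ioi_neg_deriv (hΛd 0 self_mem_Ici).continuousWithinAt
          (fun t ht => (hΛd t (Ioi_subset_Ici_self ht)).hasDerivAt (Ici_mem_nhds ht))
          (fun t ht => (hΛ'neg t (Ioi_subset_Ici_self ht)).le) hlim
    _ ≤ _ := setLIntegral_mono' measurableSet_Ioi fun t ht => ENNReal.ofReal_le_ofReal (hbound t ht)
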